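/- Let p be an odd prime dividing m, say m = np, and let E = Λ(a) ⊗ ℤ_p[b]/⟨b^m⟩ ⊗ ℤ_p[t], with the derivation d of bidegree (2,−1) given by d(a) = 0, d(b) = t·a. Then the homology H(E, d) is a free ℤ_p[t]-module in fiber degrees l = 2qp and l = 2(q+1)p − 1 for 0 ≤ q < n, generated by the classes of b^{qp} and a·b^{(q+1)p−1} respectively, together with ℤ_p-summands in base degree 0 for odd fiber degrees l not congruent to −1 mod 2p; all other bidegrees vanish. -/
import Mathlib


open MvPolynomial

/-- `E = Λ(a) ⊗ ℤ_p[b]/⟨b^m⟩ ⊗ ℤ_p[t]`, realized as the quotient of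
`ℤ_p[a,b,t]` (variables `X 0 = a`, `X 1 = b`, `X 2 = t`) by `⟨a², b^m⟩`. -/
noncomputable def eIdeal (p m : ℕ) : Ideal (MvPolynomial (Fin 3) (ZMod p)) :=
  Ideal.span {X 0 ^ 2, X 1 ^ m}

/-- Fiber weights: `deg a = 1`, `deg b = 2`, `deg t = 0`. -/
def wFib : Fin 3 → ℕ := ![1, 2, 0]

/-- Base weights: `deg a = 0`, `deg b = 0`, `deg t = 2`. -/
def wBase : Fin 3 → ℕ := ![0, 0, 2]

/-- The bigraded piece of bidegree `(k, l)` (base degree `k`, fiber degree `l`). -/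
noncomputable def ePiece (p m k l : ℕ) :
    Submodule (ZMod p) (MvPolynomial (Fin 3) (ZMod p) ⧸ eIdeal p m) :=
  Submodule.map (Ideal.Quotient.mkₐ (ZMod p) (eIdeal p m)).toLinearMap
    (weightedHomogeneousSubmodule (ZMod p) wBase k ⊓
      weightedHomogeneousSubmodule (ZMod p) wFib l)

/-- The `d`-cycles of bidegree `(k, l)`. -/
noncomputable def zSub (p m : ℕ)
    (d : (MvPolynomial (Fin 3) (ZMod p) ⧸ eIdeal p m) →ₗ[ZMod p]
      (MvPolynomial (Fin 3) (ZMod p) ⧸ eIdeal p m)) (k l : ℕ) :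
    Submodule (ZMod p) (MvPolynomial (Fin 3) (ZMod p) ⧸ eIdeal p m) :=
  ePiece p m k l ⊓ LinearMap.ker d

/-- The `d`-boundaries of bidegree `(k, l)`, as a submodule of the cycles. -/
noncomputable def bSub (p m : ℕ)
    (d : (MvPolynomial (Fin 3) (ZMod p) ⧸ eIdeal p m) →ₗ[ZMod p]
      (MvPolynomial (Fin 3) (ZMod p) ⧸ eIdeal p m)) (k l : ℕ) :
    Submodule (ZMod p) (zSub p m d k l) :=
  Submodule.comap (zSub p m d k l).subtype
    (Submodule.map d (ePiece p m (k - 2) (l + 1)))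

open Finsupp


/-- exponent finsupp -/
noncomputable def ex (i j s : ℕ) : Fin 3 →₀ ℕ :=
  Finsupp.single 0 i + Finsupp.single 1 j + Finsupp.single 2 s

@[simp] lemma ex0 (i j s : ℕ) : ex i j s 0 = i := by simp [ex, Finsupp.single_apply]
@[simp] lemma ex1 (i j s : ℕ) : ex i j s 1 = j := by simp [ex, Finsupp.single_apply]
@[simp] lemma ex2 (i j s : ℕ) : ex i j s 2 = s := by simp [ex, Finsupp.single_apply]

lemma weight_eval (w : Fin 3 → ℕ) (e : Fin 3 →₀ ℕ) :
    Finsupp.weight w e = e 0 * w 0 + e 1 * w 1 + e 2 * w 2 := by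
  rw [Finsupp.weight_apply, Finsupp.sum_fintype _ _ (by simp)]
  simp [Fin.sum_univ_three, mul_comm]

lemma wBase_eval (e : Fin 3 →₀ ℕ) : Finsupp.weight wBase e = 2 * e 2 := by
  rw [weight_eval]; simp [wBase]; ring

lemma wFib_eval (e : Fin 3 →₀ ℕ) : Finsupp.weight wFib e = e 0 + 2 * e 1 := by
  rw [weight_eval]; simp [wFib]; ring

lemma ex_eq (e : Fin 3 →₀ ℕ) (h0 : e 0 = i) (h1 : e 1 = j) (h2 : e 2 = s) :
    e = ex i j s := by
  ext x
  fin_cases x <;> simp [h0, h1, h2]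

/-- `monomial (ex i j s) 1 = X0^i X1^j X2^s` -/
lemma mono_eq (p : ℕ) (i j s : ℕ) :
    (monomial (ex i j s) (1 : ZMod p)) = X 0 ^ i * X 1 ^ j * X 2 ^ s := by
  simp [ex, X_pow_eq_monomial, monomial_mul]

lemma mem_eIdeal_of {p m : ℕ} {e : Fin 3 →₀ ℕ} (h : 2 ≤ e 0 ∨ m ≤ e 1) :
    monomial e (1 : ZMod p) ∈ eIdeal p m := by
  rcases h with h | h
  · have hle : Finsupp.single (0 : Fin 3) 2 ≤ e := Finsupp.single_le_iff.mpr h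
    have he : monomial e (1 : ZMod p) =
        X 0 ^ 2 * monomial (e - Finsupp.single 0 2) 1 := by
      rw [X_pow_eq_monomial, monomial_mul, one_mul, add_tsub_cancel_of_le hle]
    rw [he]
    exact Ideal.mul_mem_right _ _ (Ideal.subset_span (by simp))
  · have hle : Finsupp.single (1 : Fin 3) m ≤ e := Finsupp.single_le_iff.mpr h
    have he : monomial e (1 : ZMod p) =
        X 1 ^ m * monomial (e - Finsupp.single 1 m) 1 := by
      rw [X_pow_eq_monomial, monomial_mul, one_mul, add_tsub_cancel_of_le hle]
    rw [he]
    exact Ideal.mul_mem_right _ _ (Ideal.subset_span (by simp))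

lemma coeff_eIdeal_zero {p m : ℕ} {e : Fin 3 →₀ ℕ} (h0 : e 0 ≤ 1) (h1 : e 1 < m)
    {f : MvPolynomial (Fin 3) (ZMod p)} (hf : f ∈ eIdeal p m) : coeff e f = 0 := by
  rw [eIdeal, Ideal.mem_span_pair] at hf
  obtain ⟨u, v, rfl⟩ := hf
  rw [coeff_add, X_pow_eq_monomial, X_pow_eq_monomial, coeff_mul_monomial',
    coeff_mul_monomial']
  rw [if_neg, if_neg, add_zero]
  · rw [Finsupp.single_le_iff]; omega
  · rw [Finsupp.single_le_iff]; omega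

lemma ePiece_eq_span (p m k l : ℕ) :
    ePiece p m k l = Submodule.span (ZMod p)
      ((fun e : Fin 3 →₀ ℕ => Ideal.Quotient.mk (eIdeal p m) (monomial e 1)) ''
        {e : Fin 3 →₀ ℕ | 2 * e 2 = k ∧ e 0 + 2 * e 1 = l}) := by
  apply le_antisymm
  · rintro x ⟨f, ⟨hfB, hfF⟩, rfl⟩
    rw [SetLike.mem_coe, mem_weightedHomogeneousSubmodule] at hfB hfF
    have hf : f = ∑ e ∈ f.support, (coeff e f) • monomial e (1 : ZMod p) := by
      conv_lhs => rw [f.as_sum]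
      refine Finset.sum_congr rfl fun e _ => ?_
      rw [smul_monomial, smul_eq_mul, mul_one]
    rw [hf, map_sum]
    refine Submodule.sum_mem _ fun e he => ?_
    rw [map_smul]
    refine Submodule.smul_mem _ _ ?_
    have : (Ideal.Quotient.mkₐ (ZMod p) (eIdeal p m)).toLinearMap (monomial e 1) =
        Ideal.Quotient.mk (eIdeal p m) (monomial e 1) := rfl
    rw [this]
    refine Submodule.subset_span ⟨e, ⟨?_, ?_⟩, rfl⟩
    · rw [← wBase_eval]; exact hfB (MvPolynomial.mem_support_iff.mp he)
    · rw [← wFib_eval]; exact hfF (MvPolynomial.mem_support_iff.mp he)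
  · rw [Submodule.span_le]
    rintro x ⟨e, ⟨heB, heF⟩, rfl⟩
    refine ⟨monomial e 1, ⟨?_, ?_⟩, by simp⟩ <;> rw [SetLike.mem_coe]
    · rw [mem_weightedHomogeneousSubmodule]
      exact isWeightedHomogeneous_monomial _ _ _ (by rw [wBase_eval]; exact heB)
    · rw [mem_weightedHomogeneousSubmodule]
      exact isWeightedHomogeneous_monomial _ _ _ (by rw [wFib_eval]; exact heF)

lemma ePiece_bot_of {p m : ℕ} {k l : ℕ}
    (h : ∀ e : Fin 3 →₀ ℕ, 2 * e 2 = k → e 0 + 2 * e 1 = l → 2 ≤ e 0 ∨ m ≤ e 1) :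
    ePiece p m k l = ⊥ := by
  rw [ePiece_eq_span, Submodule.span_eq_bot]
  rintro x ⟨e, ⟨heB, heF⟩, rfl⟩
  rw [Ideal.Quotient.eq_zero_iff_mem]
  exact mem_eIdeal_of (h e heB heF)

lemma ePiece_span {p m k l : ℕ} {ε j s : ℕ} (hε : ε ≤ 1) (hj : j < m)
    (hk : k = 2 * s) (hl : l = ε + 2 * j) :
    ePiece p m k l = Submodule.span (ZMod p)
      {Ideal.Quotient.mk (eIdeal p m) (monomial (ex ε j s) 1)} := by
  rw [ePiece_eq_span]
  apply le_antisymm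
  · rw [Submodule.span_le]
    rintro x ⟨e, ⟨heB, heF⟩, rfl⟩
    by_cases hc : e 0 ≤ 1 ∧ e 1 < m
    · have h0 : e 0 = ε := by omega
      have h1 : e 1 = j := by omega
      have h2 : e 2 = s := by omega
      rw [ex_eq e h0 h1 h2]
      exact Submodule.subset_span rfl
    · have : Ideal.Quotient.mk (eIdeal p m) (monomial e (1 : ZMod p)) = 0 := by
        rw [Ideal.Quotient.eq_zero_iff_mem]
        exact mem_eIdeal_of (by omega)
      simp only [this]
      exact Submodule.zero_mem _
  · rw [Submodule.span_le, Set.singleton_subset_iff]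
    exact Submodule.subset_span ⟨ex ε j s, ⟨by simp [hk], by simp [hl]⟩, rfl⟩

lemma mk_monomial_ne_zero {p m : ℕ} [Fact p.Prime] {e : Fin 3 →₀ ℕ}
    (h0 : e 0 ≤ 1) (h1 : e 1 < m) :
    Ideal.Quotient.mk (eIdeal p m) (monomial e (1 : ZMod p)) ≠ 0 := by
  intro h
  rw [Ideal.Quotient.eq_zero_iff_mem] at h
  have h2 := coeff_eIdeal_zero h0 h1 h
  rw [coeff_monomial, if_pos rfl] at h2
  exact one_ne_zero h2

section Machinery
variable {p m : ℕ}
  {d : (MvPolynomial (Fin 3) (ZMod p) ⧸ eIdeal p m) →ₗ[ZMod p]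
      (MvPolynomial (Fin 3) (ZMod p) ⧸ eIdeal p m)} {k l : ℕ}

lemma mono0 (p : ℕ) (j s : ℕ) :
    (X 1 ^ j * X 2 ^ s : MvPolynomial (Fin 3) (ZMod p)) = monomial (ex 0 j s) 1 := by
  rw [mono_eq, pow_zero, one_mul]

lemma mono1 (p : ℕ) (j s : ℕ) :
    (X 0 * X 1 ^ j * X 2 ^ s : MvPolynomial (Fin 3) (ZMod p)) = monomial (ex 1 j s) 1 := by
  rw [mono_eq, pow_one]

lemma mk_C_mul (c : ZMod p) (x : MvPolynomial (Fin 3) (ZMod p)) :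
    Ideal.Quotient.mk (eIdeal p m) (C c * x) =
      c • Ideal.Quotient.mk (eIdeal p m) x := by
  rw [← smul_eq_C_mul, ← Ideal.Quotient.mkₐ_eq_mk (ZMod p), map_smul]

lemma indep [Fact p.Prime] {e f : Fin 3 →₀ ℕ} (h0 : e 0 ≤ 1) (h1 : e 1 < m)
    (hne : e ≠ f) {c c' : ZMod p}
    (h : c • Ideal.Quotient.mk (eIdeal p m) (monomial e 1) =
         c' • Ideal.Quotient.mk (eIdeal p m) (monomial f 1)) : c = 0 := by
  rw [← mk_C_mul, ← mk_C_mul, Ideal.Quotient.mk_eq_mk_iff_sub_mem] at h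
  have h2 := coeff_eIdeal_zero h0 h1 h
  rw [coeff_sub, C_mul_monomial, C_mul_monomial, mul_one, mul_one,
    coeff_monomial, coeff_monomial, if_pos rfl, if_neg (fun hh => hne hh.symm),
    sub_zero] at h2
  exact h2

instance instNZSD {p m : ℕ} [Fact p.Prime] :
    NoZeroSMulDivisors (ZMod p) (MvPolynomial (Fin 3) (ZMod p) ⧸ eIdeal p m) :=
  ⟨fun {c x} h => by
    by_cases hc : c = 0
    · exact Or.inl hc
    · right
      have h2 := congrArg (fun y => c⁻¹ • y) h
      simpa [smul_smul, inv_mul_cancel₀ hc] using h2⟩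

lemma zSub_bot_of_ePiece_bot (hE : ePiece p m k l = ⊥) : zSub p m d k l = ⊥ := by
  rw [zSub, hE, bot_inf_eq]

lemma zSub_eq_of_cycle {v} (hE : ePiece p m k l = Submodule.span (ZMod p) {v})
    (hv : d v = 0) : zSub p m d k l = Submodule.span (ZMod p) {v} := by
  rw [zSub, hE, inf_eq_left]
  exact (Submodule.span_singleton_le_iff_mem _ _).mpr (LinearMap.mem_ker.mpr hv)

lemma zSub_bot_of_ncycle [Fact p.Prime] {v}
    (hE : ePiece p m k l = Submodule.span (ZMod p) {v})
    (hv : d v ≠ 0) : zSub p m d k l = ⊥ := by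
  rw [eq_bot_iff]
  intro x hx
  rw [zSub, hE, Submodule.mem_inf, Submodule.mem_span_singleton] at hx
  obtain ⟨⟨c, rfl⟩, hk2⟩ := hx
  rw [LinearMap.mem_ker, map_smul, smul_eq_zero] at hk2
  rcases hk2 with rfl | hk2
  · simp
  · exact absurd hk2 hv

lemma bSub_bot_of_map (h : Submodule.map d (ePiece p m (k - 2) (l + 1)) = ⊥) :
    bSub p m d k l = ⊥ := by
  rw [bSub, h, Submodule.comap_bot, Submodule.ker_subtype]

lemma bSub_top_of (hz : zSub p m d k l ≤ Submodule.map d (ePiece p m (k - 2) (l + 1))) :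
    bSub p m d k l = ⊤ := by
  rw [eq_top_iff]
  intro x _
  exact hz x.2

lemma map_span_singleton (v : (MvPolynomial (Fin 3) (ZMod p) ⧸ eIdeal p m)) :
    Submodule.map d (Submodule.span (ZMod p) {v}) = Submodule.span (ZMod p) {d v} := by
  rw [Submodule.map_span, Set.image_singleton]

lemma quot_subsingleton_of_zbot (h : zSub p m d k l = ⊥) :
    Subsingleton (zSub p m d k l ⧸ bSub p m d k l) := by
  have : Subsingleton (zSub p m d k l) := by rw [h]; infer_instance
  exact (Submodule.Quotient.mk_surjective _).subsingleton

lemma quot_subsingleton_of_btop (h : bSub p m d k l = ⊤) :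
    Subsingleton (zSub p m d k l ⧸ bSub p m d k l) :=
  Submodule.Quotient.subsingleton_iff.mpr h

lemma equiv_of [Fact p.Prime] {v} (hz : zSub p m d k l = Submodule.span (ZMod p) {v})
    (hv : v ≠ 0) (hb : bSub p m d k l = ⊥) :
    Nonempty ((zSub p m d k l ⧸ bSub p m d k l) ≃ₗ[ZMod p] ZMod p) := by
  have e2 : zSub p m d k l ≃ₗ[ZMod p] ZMod p :=
    (LinearEquiv.ofEq _ _ hz).trans
      (LinearEquiv.toSpanNonzeroSingleton (ZMod p)
        (MvPolynomial (Fin 3) (ZMod p) ⧸ eIdeal p m) v hv).symm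
  exact ⟨(Submodule.quotEquivOfEqBot _ hb).trans e2⟩

lemma nonvanish [Fact p.Prime] (hb : bSub p m d k l = ⊥)
    {x : MvPolynomial (Fin 3) (ZMod p)} {e : Fin 3 →₀ ℕ} (hx : x = monomial e 1)
    (h0 : e 0 ≤ 1) (h1 : e 1 < m)
    (h : Ideal.Quotient.mk (eIdeal p m) x ∈ zSub p m d k l) :
    (Submodule.Quotient.mk (p := bSub p m d k l) ⟨_, h⟩) ≠ 0 := by
  subst hx
  rw [Ne, Submodule.Quotient.mk_eq_zero, hb, Submodule.mem_bot]
  intro hx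
  exact mk_monomial_ne_zero h0 h1 (congrArg Subtype.val hx)

end Machinery

/-- let `p` be an odd prime, `m = np`, and `d` the derivation of
bidegree `(2,-1)` on `E = Λ(a) ⊗ ℤ_p[b]/⟨b^m⟩ ⊗ ℤ_p[t]` with `d(a) = 0`,
`d(b) = t·a` (so `d(b^j t^k) = j·a·b^{j-1}·t^{k+1}` and `d(a·b^j·t^k) = 0`).
Then `H(E,d)` is a free `ℤ_p[t]`-module in fiber degrees `l = 2qp` and
`l = 2(q+1)p - 1` (`0 ≤ q < n`), generated by the classes of `b^{qp}` and
`a·b^{(q+1)p-1}` respectively (these classes are nonzero in every even base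
degree `k`), together with `ℤ_p`-summands in base degree `0` for odd fiber
degrees `l` not congruent to `-1 mod 2p`; all other bidegrees vanish. -/

theorem stmt11 (p n m : ℕ) [Fact p.Prime] (hp : Odd p) (hn : 1 ≤ n)
    (hm : m = n * p)
    (d : (MvPolynomial (Fin 3) (ZMod p) ⧸ eIdeal p m) →ₗ[ZMod p]
      (MvPolynomial (Fin 3) (ZMod p) ⧸ eIdeal p m))
    (hdb : ∀ j k : ℕ, d (Ideal.Quotient.mk (eIdeal p m) (X 1 ^ j * X 2 ^ k))
      = (j : ZMod p) •
        Ideal.Quotient.mk (eIdeal p m) (X 0 * X 1 ^ (j - 1) * X 2 ^ (k + 1)))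
    (hda : ∀ j k : ℕ,
      d (Ideal.Quotient.mk (eIdeal p m) (X 0 * X 1 ^ j * X 2 ^ k)) = 0) :
    ∀ k l : ℕ,
      ((Even k ∧ ∃ q : ℕ, q < n ∧ (l = 2 * q * p ∨ l = 2 * (q + 1) * p - 1)) ∨
        (k = 0 ∧ Odd l ∧ l ≤ 2 * m - 1 ∧ ¬(2 * p ∣ l + 1)) →
        Nonempty ((zSub p m d k l ⧸ bSub p m d k l) ≃ₗ[ZMod p] ZMod p)) ∧
      (¬((Even k ∧ ∃ q : ℕ, q < n ∧ (l = 2 * q * p ∨ l = 2 * (q + 1) * p - 1)) ∨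
        (k = 0 ∧ Odd l ∧ l ≤ 2 * m - 1 ∧ ¬(2 * p ∣ l + 1))) →
        Subsingleton (zSub p m d k l ⧸ bSub p m d k l)) ∧
      (∀ q : ℕ, q < n → Even k → l = 2 * q * p →
        ∀ h : Ideal.Quotient.mk (eIdeal p m) (X 1 ^ (q * p) * X 2 ^ (k / 2))
            ∈ zSub p m d k l,
          (Submodule.Quotient.mk (p := bSub p m d k l) ⟨_, h⟩) ≠ 0) ∧
      (∀ q : ℕ, q < n → Even k → l = 2 * (q + 1) * p - 1 →
        ∀ h : Ideal.Quotient.mk (eIdeal p m)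
              (X 0 * X 1 ^ ((q + 1) * p - 1) * X 2 ^ (k / 2)) ∈ zSub p m d k l,
          (Submodule.Quotient.mk (p := bSub p m d k l) ⟨_, h⟩) ≠ 0) := by
  have hp' : p.Prime := Fact.out
  have hp2 : 2 ≤ p := hp'.two_le
  have hm1 : 1 ≤ m := by rw [hm]; exact Nat.mul_pos (by omega) (by omega)
  have hpm : p ∣ m := hm ▸ dvd_mul_left p n
  have hnpm : n * p = m := hm.symm
  intro k l
  have de0 : ∀ j s : ℕ, d (Ideal.Quotient.mk (eIdeal p m) (monomial (ex 0 j s) 1))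
      = (j : ZMod p) •
        Ideal.Quotient.mk (eIdeal p m) (monomial (ex 1 (j - 1) (s + 1)) 1) := by
    intro j s; rw [← mono0, ← mono1]; exact hdb j s
  have de1 : ∀ j s : ℕ,
      d (Ideal.Quotient.mk (eIdeal p m) (monomial (ex 1 j s) 1)) = 0 := by
    intro j s; rw [← mono1]; exact hda j s
  by_cases hk2 : k % 2 = 1
  · -- k odd: everything vanishes
    have hz : zSub p m d k l = ⊥ :=
      zSub_bot_of_ePiece_bot (ePiece_bot_of fun e h1 h2 => by omega)
    refine ⟨?_, fun _ => quot_subsingleton_of_zbot hz, ?_, ?_⟩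
    · rintro (⟨hke, -⟩ | ⟨hk0, -⟩)
      · exfalso; rw [Nat.even_iff] at hke; omega
      · exfalso; omega
    · intro q hq hke hlq h; exfalso; rw [Nat.even_iff] at hke; omega
    · intro q hq hke hlq h; exfalso; rw [Nat.even_iff] at hke; omega
  · -- k even
    have hke : Even k := Nat.even_iff.mpr (by omega)
    set s := k / 2 with hs
    have hks : k = 2 * s := by omega
    by_cases hl2 : l % 2 = 0
    · -- l even
      set j := l / 2 with hjdef
      have hlj : l = 2 * j := by omega
      by_cases hjm : j < m
      · by_cases hpj : p ∣ j
        · -- nonzero homology generated by b^j t^s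
          have hE : ePiece p m k l = Submodule.span (ZMod p)
              {Ideal.Quotient.mk (eIdeal p m) (monomial (ex 0 j s) 1)} :=
            ePiece_span (by omega) hjm hks (by omega)
          have hdv : d (Ideal.Quotient.mk (eIdeal p m) (monomial (ex 0 j s) 1)) = 0 := by
            rw [de0, (ZMod.natCast_eq_zero_iff j p).mpr hpj, zero_smul]
          have hz := zSub_eq_of_cycle hE hdv
          have hb : bSub p m d k l = ⊥ := by
            apply bSub_bot_of_map
            rw [ePiece_span (ε := 1) (j := j) (s := s - 1) (by omega) hjm
              (by omega) (by omega), map_span_singleton, de1,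
              Submodule.span_zero_singleton]
          have hvne := mk_monomial_ne_zero (p := p) (m := m) (e := ex 0 j s)
            (by simp) (by simpa using hjm)
          refine ⟨fun _ => equiv_of hz hvne hb, ?_, ?_, ?_⟩
          · intro hnc; exfalso; apply hnc; left
            obtain ⟨c, hc⟩ := hpj
            have hcn : c < n := by
              have h1 : c * p < n * p := by rw [mul_comm c p, hnpm, ← hc]; omega
              exact Nat.lt_of_mul_lt_mul_right h1
            exact ⟨hke, c, hcn, Or.inl (by rw [mul_assoc, mul_comm c p, ← hc, ← hlj])⟩
          · intro q hq _ hlq h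
            have hqpj : q * p = j := by rw [mul_assoc] at hlq; omega
            exact nonvanish hb (by rw [hqpj]; exact mono0 p j s)
              (by simp) (by simpa using hjm) h
          · intro q hq _ hlq h; exfalso
            have h1 : 1 ≤ (q + 1) * p := Nat.mul_pos (by omega) (by omega)
            rw [mul_assoc] at hlq; omega
        · -- not a cycle: zero homology
          have hE : ePiece p m k l = Submodule.span (ZMod p)
              {Ideal.Quotient.mk (eIdeal p m) (monomial (ex 0 j s) 1)} :=
            ePiece_span (by omega) hjm hks (by omega)
          have hdv : d (Ideal.Quotient.mk (eIdeal p m) (monomial (ex 0 j s) 1)) ≠ 0 := by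
            rw [de0]
            exact smul_ne_zero
              (fun hc => hpj ((ZMod.natCast_eq_zero_iff j p).mp hc))
              (mk_monomial_ne_zero (by simp) (by simp; omega))
          have hz := zSub_bot_of_ncycle hE hdv
          have hcontra : ∀ q : ℕ, l = 2 * q * p → False := by
            intro q hlq
            have hd2 : p ∣ q * p := dvd_mul_left p q
            rw [mul_assoc] at hlq
            have : j = q * p := by omega
            exact hpj (this ▸ hd2)
          refine ⟨?_, fun _ => quot_subsingleton_of_zbot hz, ?_, ?_⟩
          · rintro (⟨-, q, hq, hlq | hlq⟩ | ⟨-, hlo, -⟩)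
            · exact absurd hlq (fun hh => hcontra q hh)
            · exfalso
              have h1 : 1 ≤ (q + 1) * p := Nat.mul_pos (by omega) (by omega)
              rw [mul_assoc] at hlq; omega
            · exfalso; rw [Nat.odd_iff] at hlo; omega
          · intro q hq _ hlq h; exact absurd hlq (fun hh => hcontra q hh)
          · intro q hq _ hlq h; exfalso
            have h1 : 1 ≤ (q + 1) * p := Nat.mul_pos (by omega) (by omega)
            rw [mul_assoc] at hlq; omega
      · -- j ≥ m : piece vanishes
        have hz : zSub p m d k l = ⊥ :=
          zSub_bot_of_ePiece_bot (ePiece_bot_of fun e h1 h2 => by omega)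
        refine ⟨?_, fun _ => quot_subsingleton_of_zbot hz, ?_, ?_⟩
        · rintro (⟨-, q, hq, hlq | hlq⟩ | ⟨-, hlo, -⟩)
          · exfalso
            have h1 : q * p < n * p :=
              (Nat.mul_lt_mul_right (show 0 < p by omega)).mpr hq
            rw [mul_assoc] at hlq; omega
          · exfalso
            have h1 : 1 ≤ (q + 1) * p := Nat.mul_pos (by omega) (by omega)
            rw [mul_assoc] at hlq; omega
          · exfalso; rw [Nat.odd_iff] at hlo; omega
        · intro q hq _ hlq h; exfalso
          have h1 : q * p < n * p :=
            (Nat.mul_lt_mul_right (show 0 < p by omega)).mpr hq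
          rw [mul_assoc] at hlq; omega
        · intro q hq _ hlq h; exfalso
          have h1 : 1 ≤ (q + 1) * p := Nat.mul_pos (by omega) (by omega)
          rw [mul_assoc] at hlq; omega
    · -- l odd
      set j := l / 2 with hjdef
      have hlj : l = 2 * j + 1 := by omega
      by_cases hjm : j < m
      · have hE : ePiece p m k l = Submodule.span (ZMod p)
            {Ideal.Quotient.mk (eIdeal p m) (monomial (ex 1 j s) 1)} :=
          ePiece_span (by omega) hjm hks (by omega)
        have hz := zSub_eq_of_cycle hE (de1 j s)
        have hvne := mk_monomial_ne_zero (p := p) (m := m) (e := ex 1 j s)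
          (by simp) (by simpa using hjm)
        by_cases hpj : p ∣ (j + 1)
        · -- free part: a b^j t^s survives
          have hb : bSub p m d k l = ⊥ := by
            apply bSub_bot_of_map
            by_cases hjm1 : j + 1 < m
            · rw [ePiece_span (ε := 0) (j := j + 1) (s := s - 1) (by omega) hjm1
                (by omega) (by omega), map_span_singleton, de0,
                (ZMod.natCast_eq_zero_iff (j + 1) p).mpr hpj, zero_smul,
                Submodule.span_zero_singleton]
            · rw [ePiece_bot_of (fun e h1 h2 => by omega), Submodule.map_bot]
          refine ⟨fun _ => equiv_of hz hvne hb, ?_, ?_, ?_⟩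
          · intro hnc; exfalso; apply hnc; left
            obtain ⟨c, hc⟩ := hpj
            rcases c with - | c
            · omega
            have hcn : c + 1 ≤ n := by
              have h1 : (c + 1) * p ≤ n * p := by
                rw [mul_comm (c + 1) p, hnpm, ← hc]; omega
              exact Nat.le_of_mul_le_mul_right h1 (by omega)
            refine ⟨hke, c, by omega, Or.inr ?_⟩
            rw [mul_assoc, mul_comm (c + 1) p, ← hc]; omega
          · intro q hq _ hlq h; exfalso; rw [mul_assoc] at hlq; omega
          · intro q hq _ hlq h
            have h1 : 1 ≤ (q + 1) * p := Nat.mul_pos (by omega) (by omega)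
            have hA : (q + 1) * p - 1 = j := by rw [mul_assoc] at hlq; omega
            exact nonvanish hb (by rw [hA]; exact mono1 p j s)
              (by simp) (by simpa using hjm) h
        · -- p ∤ j+1
          have hjm1 : j + 1 < m := by
            rcases Nat.lt_or_ge (j + 1) m with h | h
            · exact h
            · exfalso
              have : j + 1 = m := by omega
              exact hpj (this ▸ hpm)
          have hcontra4 : ∀ q : ℕ, l = 2 * (q + 1) * p - 1 → False := by
            intro q hlq
            have h1 : 1 ≤ (q + 1) * p := Nat.mul_pos (by omega) (by omega)
            rw [mul_assoc] at hlq
            have h2 : j + 1 = (q + 1) * p := by omega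
            exact hpj (h2 ▸ dvd_mul_left p (q + 1))
          by_cases hk0 : k = 0
          · -- base degree 0: extra summand
            have hs0 : s = 0 := by omega
            have hb : bSub p m d k l = ⊥ := by
              rw [eq_bot_iff]
              intro x hx
              have hx' : (x : MvPolynomial (Fin 3) (ZMod p) ⧸ eIdeal p m) ∈
                  Submodule.map d (ePiece p m (k - 2) (l + 1)) := hx
              rw [ePiece_span (ε := 0) (j := j + 1) (s := s - 1) (by omega) hjm1
                (by omega) (by omega), map_span_singleton, de0,
                Submodule.mem_span_singleton] at hx'
              obtain ⟨c', hc'⟩ := hx'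
              obtain ⟨c, hc⟩ := Submodule.mem_span_singleton.mp (hz.le x.2)
              have heq : c • Ideal.Quotient.mk (eIdeal p m) (monomial (ex 1 j s) 1)
                  = (c' * ((j + 1 : ℕ) : ZMod p)) • Ideal.Quotient.mk (eIdeal p m)
                    (monomial (ex 1 (j + 1 - 1) (s - 1 + 1)) 1) := by
                rw [mul_smul, hc', hc]
              have hne : ex 1 j s ≠ ex 1 (j + 1 - 1) (s - 1 + 1) := by
                intro hef
                have h2 := congrArg (fun g => g 2) hef
                simp at h2
                omega
              have hc0 : c = 0 := indep (by simp) (by simpa using hjm) hne heq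
              rw [Submodule.mem_bot]
              exact Subtype.ext (by rw [← hc, hc0, zero_smul]; rfl)
            refine ⟨fun _ => equiv_of hz hvne hb, ?_, ?_, ?_⟩
            · intro hnc; exfalso; apply hnc; right
              refine ⟨hk0, Nat.odd_iff.mpr (by omega), by omega, ?_⟩
              intro hdvd
              obtain ⟨c, hc⟩ := hdvd
              apply hpj
              refine ⟨c, ?_⟩
              rw [mul_assoc] at hc; omega
            · intro q hq _ hlq h; exfalso; rw [mul_assoc] at hlq; omega
            · intro q hq _ hlq h
              have h1 : 1 ≤ (q + 1) * p := Nat.mul_pos (by omega) (by omega)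
              have hA : (q + 1) * p - 1 = j := by rw [mul_assoc] at hlq; omega
              exact nonvanish hb (by rw [hA]; exact mono1 p j s)
                (by simp) (by simpa using hjm) h
          · -- k ≥ 2: boundary kills everything
            have hs1 : 1 ≤ s := by omega
            have hb : bSub p m d k l = ⊤ := by
              apply bSub_top_of
              rw [hz, ePiece_span (ε := 0) (j := j + 1) (s := s - 1) (by omega) hjm1
                (by omega) (by omega), map_span_singleton, de0,
                Nat.add_sub_cancel, Nat.sub_add_cancel hs1,
                Submodule.span_singleton_smul_eq (by
                  refine isUnit_iff_ne_zero.mpr ?_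
                  exact fun hc => hpj ((ZMod.natCast_eq_zero_iff (j + 1) p).mp hc)) _]
            refine ⟨?_, fun _ => quot_subsingleton_of_btop hb, ?_, ?_⟩
            · rintro (⟨-, q, hq, hlq | hlq⟩ | ⟨hk0', -⟩)
              · exfalso; rw [mul_assoc] at hlq; omega
              · exact absurd hlq (fun hh => hcontra4 q hh)
              · exact absurd hk0' hk0
            · intro q hq _ hlq h; exfalso; rw [mul_assoc] at hlq; omega
            · intro q hq _ hlq h; exact absurd hlq (fun hh => hcontra4 q hh)
      · -- j ≥ m
        have hz : zSub p m d k l = ⊥ :=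
          zSub_bot_of_ePiece_bot (ePiece_bot_of fun e h1 h2 => by omega)
        have hcontra4 : ∀ q : ℕ, q < n → l = 2 * (q + 1) * p - 1 → False := by
          intro q hq hlq
          have h1 : 1 ≤ (q + 1) * p := Nat.mul_pos (by omega) (by omega)
          have h2 : (q + 1) * p ≤ n * p := Nat.mul_le_mul_right p (by omega)
          rw [mul_assoc] at hlq; omega
        refine ⟨?_, fun _ => quot_subsingleton_of_zbot hz, ?_, ?_⟩
        · rintro (⟨-, q, hq, hlq | hlq⟩ | ⟨-, -, hlub, -⟩)
          · exfalso; rw [mul_assoc] at hlq; omega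
          · exact absurd hlq (fun hh => hcontra4 q hq hh)
          · exfalso; omega
        · intro q hq _ hlq h; exfalso; rw [mul_assoc] at hlq; omega
        · intro q hq _ hlq h; exact absurd hlq (fun hh => hcontra4 q hq hh)
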